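/- arXiv:1711.04296 — 4 statements merged into one kernel-verified Lean document; each statement's English description precedes it below -/
import Mathlib

section
/- Let K be a field, ν a valuation on the polynomial ring K[x] with trivial support, K̄ an algebraic closure of K, and μ an extension of ν to K̄[x]. Then for every monic polynomial f ∈ K[x], one has δ(f) = ε(f), i.e., max{μ(x−a) : a a root of f in K̄} = max over integers r ≥ 1 of (ν(f) − ν(∂_r f))/r. -/
open Polynomial

section KeyPolyDefs

variable {K : Type*} [Field K] {Γ : Type*} [AddCommGroup Γ] [LinearOrder Γ] [IsOrderedAddMonoid Γ]

/-- The value `ν f` read in `Γ` (junk value `0` when `ν f = ⊤`). -/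
noncomputable def aval (ν : AddValuation (Polynomial K) (WithTop Γ)) (f : Polynomial K) : Γ :=
  WithTop.untopD 0 (ν f)

/-- `ν` has trivial support: only `0` has value `⊤`. -/
def TrivialSupport (ν : AddValuation (Polynomial K) (WithTop Γ)) : Prop :=
  ∀ f : Polynomial K, ν f = ⊤ → f = 0

/-- The set of indices `r`, `1 ≤ r ≤ deg f` with `∂_r f ≠ 0`, over which `ε(f)` is computed. -/
noncomputable def epsSupport (f : Polynomial K) : Finset ℕ :=
  @Finset.filter _ (fun r => f.hasseDeriv r ≠ 0) (Classical.decPred _) (Finset.Icc 1 f.natDegree)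

/-- `ε(f) = max_{r ≥ 1} (ν f - ν ∂_r f) / r`, computed in the divisible group `Γ`. -/
noncomputable def eps [Module ℚ Γ] (ν : AddValuation (Polynomial K) (WithTop Γ))
    (f : Polynomial K) : Γ :=
  if h : (epsSupport f).Nonempty then
    (epsSupport f).sup' h fun r => ((r : ℚ)⁻¹) • (aval ν f - aval ν (f.hasseDeriv r))
  else 0

/-- `Q` is a key polynomial for `ν`: `Q` is monic and every `f` with `ε(f) ≥ ε(Q)` satisfies
`deg f ≥ deg Q`. -/
def IsKeyPoly [Module ℚ Γ] (ν : AddValuation (Polynomial K) (WithTop Γ))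
    (Q : Polynomial K) : Prop :=
  Q.Monic ∧ 0 < Q.natDegree ∧
    ∀ f : Polynomial K, 0 < f.natDegree → eps ν Q ≤ eps ν f → Q.natDegree ≤ f.natDegree

/-- The `i`-th coefficient of the `q`-expansion of a polynomial. -/
noncomputable def qCoeff (q : Polynomial K) : ℕ → Polynomial K → Polynomial K
  | 0, p => p % q
  | n + 1, p => qCoeff q n (p / q)

/-- The `q`-truncation `ν_q` of `ν`:  `ν_q(p) = min_i ν(p_i q^i)` where `p = Σ p_i q^i`
is the `q`-expansion of `p`. -/
noncomputable def trunc (ν : AddValuation (Polynomial K) (WithTop Γ)) (q p : Polynomial K) :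
    WithTop Γ :=
  (Finset.range (p.natDegree + 1)).inf fun i => ν (qCoeff q i p * q ^ i)

variable {L : Type*} [Field L] [Algebra K L]

/-- `δ(f)`: the maximal value `μ(x - a)` over the roots `a` of `f` in `L`
(junk value `0` if `f` has no roots in `L`). -/
noncomputable def delta (μ : AddValuation (Polynomial L) (WithTop Γ)) (f : Polynomial K) : Γ :=
  letI := Classical.decEq L
  if h : ((f.map (algebraMap K L)).roots.toFinset).Nonempty then
    ((f.map (algebraMap K L)).roots.toFinset).sup' h fun a => aval μ (X - C a)
  else 0

/-- `μ` on `L[x]` extends `ν` on `K[x]`. -/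
def IsExtension (μ : AddValuation (Polynomial L) (WithTop Γ))
    (ν : AddValuation (Polynomial K) (WithTop Γ)) : Prop :=
  ∀ f : Polynomial K, μ (f.map (algebraMap K L)) = ν f

/-- `w` on `K(x)` extends `ν` on `K[x]`. -/
def ExtendsToRatFunc (w : AddValuation (RatFunc K) (WithTop Γ))
    (ν : AddValuation (Polynomial K) (WithTop Γ)) : Prop :=
  ∀ p : Polynomial K, w (algebraMap (Polynomial K) (RatFunc K) p) = ν p

/-- The residue of `f` is transcendental over the residue field `Kν`:  every polynomial with
coefficients in the valuation ring of `K`, at least one of which is a unit, keeps value `0`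
when evaluated at `f`. -/
def ResidueTranscendentalElem (w : AddValuation (RatFunc K) (WithTop Γ)) (f : RatFunc K) : Prop :=
  ∀ (n : ℕ) (c : ℕ → K),
    (∀ i ≤ n, 0 ≤ w (algebraMap K (RatFunc K) (c i))) →
    (∃ i ≤ n, w (algebraMap K (RatFunc K) (c i)) = 0) →
    w (∑ i ∈ Finset.range (n + 1), algebraMap K (RatFunc K) (c i) * f ^ i) = 0

/-- The residue of `g` is algebraic over the residue field `Kν`: some polynomial with
coefficients in the valuation ring of `K`, at least one of which is a unit, gets positive
value when evaluated at `g`. -/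
def ResidueAlgebraicElem (w : AddValuation (RatFunc K) (WithTop Γ)) (g : RatFunc K) : Prop :=
  ∃ (n : ℕ) (c : ℕ → K),
    (∀ i ≤ n, 0 ≤ w (algebraMap K (RatFunc K) (c i))) ∧
    (∃ i ≤ n, w (algebraMap K (RatFunc K) (c i)) = 0) ∧
    0 < w (∑ i ∈ Finset.range (n + 1), algebraMap K (RatFunc K) (c i) * g ^ i)

/-- `w` is residue-transcendental: some `f` with `w f = 0` has transcendental residue. -/
def IsResidueTranscendental (w : AddValuation (RatFunc K) (WithTop Γ)) : Prop :=
  ∃ f : RatFunc K, w f = 0 ∧ ResidueTranscendentalElem w f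

/-- `w` is value-transcendental: some value `w f` is torsion-free over the value group
`νK` of `K`, i.e. `n ν(f) ∉ νK` for every `n ≥ 1`. -/
def IsValueTranscendental (w : AddValuation (RatFunc K) (WithTop Γ)) : Prop :=
  ∃ f : RatFunc K, f ≠ 0 ∧
    ∀ n : ℕ, 0 < n → ∀ c : K, c ≠ 0 → w (f ^ n) ≠ w (algebraMap K (RatFunc K) c)

/-- `w` is valuation-transcendental: it is value-transcendental or residue-transcendental. -/
def IsValuationTranscendental (w : AddValuation (RatFunc K) (WithTop Γ)) : Prop :=
  IsValueTranscendental w ∨ IsResidueTranscendental w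

end KeyPolyDefs

section MinimalPairDefs

variable {Γ : Type*} [AddCommGroup Γ] [LinearOrder Γ] [IsOrderedAddMonoid Γ] {L : Type*} [Field L]

/-- `(a, d)` is a minimal pair for the valuation (w.r.t. the extension `μ` to `L[x]`):
every `b` with `μ(b - a) ≥ d` satisfies `[K(b) : K] ≥ [K(a) : K]`. -/
def IsMinimalPair (K : Type*) [Field K] [Algebra K L]
    (μ : AddValuation (Polynomial L) (WithTop Γ)) (a : L) (d : Γ) : Prop :=
  ∀ b : L, (d : WithTop Γ) ≤ μ (C (b - a)) →
    (minpoly K a).natDegree ≤ (minpoly K b).natDegree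

/-- `(a, d)` is a minimal pair of definition: a minimal pair with `μ(x - a) = d ≥ μ(x - b)`
for every `b ∈ L`. -/
def IsMinimalPairOfDefinition (K : Type*) [Field K] [Algebra K L]
    (μ : AddValuation (Polynomial L) (WithTop Γ)) (a : L) (d : Γ) : Prop :=
  IsMinimalPair K μ a d ∧ μ (X - C a) = (d : WithTop Γ) ∧
    ∀ b : L, μ (X - C b) ≤ (d : WithTop Γ)

end MinimalPairDefs

/-!
Over `K̄` we have `f = ∏ (X - a)`, and Vieta's formula writes `∂_r f` as the sum of the products
of `f` with `r` linear factors removed; hence `ν f - ν ∂_r f ≤ r δ(f)`. If `D` is the multiset of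
roots with `μ(X - a) = δ(f)`, `E` the other roots and `r = |D|`, Leibniz' rule for
`f = ∏_D (X - a) · ∏_E (X - a)` shows that `∂_r f` has exactly the value of `∏_E (X - a)`,
which is `ν f - r δ(f)`.
-/

namespace Polynomial

open Finset.HasAntidiagonal

variable {R : Type*} [CommRing R]

theorem hasseDeriv_map {S : Type*} [CommRing S] (φ : R →+* S) (p : R[X]) (r : ℕ) :
    hasseDeriv r (p.map φ) = (hasseDeriv r p).map φ := by
  ext k
  simp only [coeff_map, hasseDeriv_coeff, map_mul, map_natCast]

theorem hasseDeriv_natDegree_of_monic {p : R[X]} (hp : p.Monic) :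
    hasseDeriv p.natDegree p = 1 := by
  rw [hasseDeriv_natDegree_eq_C, hp.leadingCoeff, C_1]

theorem coeff_taylor_X_map_C (p : R[X]) (r : ℕ) :
    (taylor (X : R[X]) (p.map C)).coeff r = hasseDeriv r p := by
  rw [taylor_coeff, hasseDeriv_map, eval_map, eval₂_C_X]

theorem hasseDeriv_natDegree_mul_of_monic {p : R[X]} (hp : p.Monic) (q : R[X]) :
    hasseDeriv p.natDegree (p * q) =
      q + ∑ ij ∈ (antidiagonal p.natDegree).erase (p.natDegree, 0),
        hasseDeriv ij.1 p * hasseDeriv ij.2 q := by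
  have hmem : (p.natDegree, 0) ∈ antidiagonal p.natDegree := mem_antidiagonal.mpr (add_zero _)
  rw [hasseDeriv_mul, ← Finset.add_sum_erase _ _ hmem, hasseDeriv_natDegree_of_monic hp,
    hasseDeriv_zero', one_mul]

/-- The Taylor expansion of `∏ (X - a)` at `X` is `∏ (Y + (X - a))`; compare the coefficients
of `Y ^ r` by Vieta's formula. -/
theorem hasseDeriv_multiset_prod_X_sub_C (t : Multiset R) {r : ℕ} (hr : r ≤ Multiset.card t) :
    hasseDeriv r (t.map fun a => X - C a).prod =
      ((t.powersetCard (Multiset.card t - r)).map fun u => (u.map fun a => X - C a).prod).sum := by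
  have htaylor : taylor (X : R[X]) ((t.map fun a => X - C a).prod.map C) =
      (t.map fun a => X + C (X - C a)).prod := by
    change taylorAlgHom (X : R[X]) _ = _
    rw [Polynomial.map_multiset_prod, map_multiset_prod, Multiset.map_map, Multiset.map_map]
    refine congrArg _ (Multiset.map_congr rfl fun a _ => ?_)
    simp only [Function.comp_apply, Polynomial.map_sub, map_X, map_C, taylorAlgHom_apply,
      taylor_apply, sub_comp, X_comp, C_comp, C_sub]
    ring
  rw [← coeff_taylor_X_map_C, htaylor, Multiset.prod_X_add_C_coeff' _ _ hr, Multiset.esymm,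
    Multiset.powersetCard_map, Multiset.map_map]
  rfl

end Polynomial

theorem AddValuation.le_map_multiset_sum {R Γ₀ : Type*} [Ring R]
    [LinearOrderedAddCommMonoidWithTop Γ₀] (v : AddValuation R Γ₀) {g : Γ₀} {s : Multiset R}
    (h : ∀ x ∈ s, g ≤ v x) : g ≤ v s.sum := by
  induction s using Multiset.induction_on with
  | empty => simp
  | cons a s ih =>
    rw [Multiset.sum_cons]
    exact v.map_le_add (h a (Multiset.mem_cons_self a s))
      (ih fun x hx => h x (Multiset.mem_cons_of_mem hx))

section ValuationOfRoots

variable {L Γ : Type*} [Field L] [AddCommGroup Γ] [LinearOrder Γ] [IsOrderedAddMonoid Γ]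
  {μ : AddValuation L[X] (WithTop Γ)}

theorem coe_aval_of_ne_zero (hμ : TrivialSupport μ) {p : L[X]} (hp : p ≠ 0) :
    ((aval μ p : Γ) : WithTop Γ) = μ p := by
  obtain ⟨x, hx⟩ := WithTop.ne_top_iff_exists.mp fun h => hp (hμ p h)
  rw [aval, ← hx, WithTop.untopD_coe]

theorem valuation_multiset_prod_X_sub_C (hμ : TrivialSupport μ) (t : Multiset L) :
    μ (t.map fun a => X - C a).prod = ((t.map fun a => aval μ (X - C a)).sum : Γ) := by
  induction t using Multiset.induction_on with
  | empty => simp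
  | cons a t ih =>
    rw [Multiset.map_cons, Multiset.prod_cons, μ.map_mul, ih, Multiset.map_cons,
      Multiset.sum_cons, WithTop.coe_add, coe_aval_of_ne_zero hμ (X_sub_C_ne_zero a)]

theorem aval_multiset_prod_X_sub_C (hμ : TrivialSupport μ) (t : Multiset L) :
    aval μ (t.map fun a => X - C a).prod = (t.map fun a => aval μ (X - C a)).sum := by
  rw [aval, valuation_multiset_prod_X_sub_C hμ, WithTop.untopD_coe]

/-- Each term of Vieta's formula omits `r` roots, each of value at most `d`. -/
theorem le_valuation_hasseDeriv_multiset_prod_X_sub_C (hμ : TrivialSupport μ) {t : Multiset L}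
    {d : Γ} (hd : ∀ a ∈ t, aval μ (X - C a) ≤ d) (r : ℕ) :
    (((t.map fun a => aval μ (X - C a)).sum - r • d : Γ) : WithTop Γ) ≤
      μ (hasseDeriv r (t.map fun a => X - C a).prod) := by
  classical
  rcases le_or_gt r (Multiset.card t) with hr | hr
  · rw [hasseDeriv_multiset_prod_X_sub_C t hr]
    refine μ.le_map_multiset_sum fun q hq => ?_
    obtain ⟨u, hu, rfl⟩ := Multiset.mem_map.mp hq
    obtain ⟨hut, hcard⟩ := Multiset.mem_powersetCard.mp hu
    have hcompl : Multiset.card (t - u) = r := by rw [Multiset.card_sub hut]; omega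
    have hsplit : (t.map fun a => aval μ (X - C a)).sum =
        ((t - u).map fun a => aval μ (X - C a)).sum + (u.map fun a => aval μ (X - C a)).sum := by
      rw [← Multiset.sum_add, ← Multiset.map_add, tsub_add_cancel_of_le hut]
    have hcompl_le : ((t - u).map fun a => aval μ (X - C a)).sum ≤ r • d := by
      simpa [hcompl] using Multiset.sum_le_card_nsmul ((t - u).map fun a => aval μ (X - C a)) d
        (by simpa using fun a ha => hd a (Multiset.mem_of_le tsub_le_self ha))
    rw [valuation_multiset_prod_X_sub_C hμ, WithTop.coe_le_coe, hsplit, add_sub_right_comm]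
    exact add_le_of_nonpos_left (sub_nonpos.mpr hcompl_le)
  · rw [hasseDeriv_eq_zero_of_lt_natDegree _ _
      (by rwa [natDegree_multiset_prod_X_sub_C_eq_card]), μ.map_zero]
    exact le_top

/-- Apply the non-strict bound with `d` replaced by the largest root value, which is `< d`. -/
theorem lt_valuation_hasseDeriv_multiset_prod_X_sub_C (hμ : TrivialSupport μ) {t : Multiset L}
    {d : Γ} (hd : ∀ a ∈ t, aval μ (X - C a) < d) {r : ℕ} (hr : 0 < r) :
    (((t.map fun a => aval μ (X - C a)).sum - r • d : Γ) : WithTop Γ) <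
      μ (hasseDeriv r (t.map fun a => X - C a).prod) := by
  classical
  rcases Multiset.empty_or_exists_mem t with rfl | ⟨a, ha⟩
  · simpa [hasseDeriv_apply_one _ hr] using WithTop.coe_lt_top (-(r • d))
  have hne : t.toFinset.Nonempty := ⟨a, Multiset.mem_toFinset.mpr ha⟩
  set d' := t.toFinset.sup' hne fun a => aval μ (X - C a)
  have hd'd : d' < d :=
    (Finset.sup'_lt_iff hne).mpr fun a ha => hd a (Multiset.mem_toFinset.mp ha)
  refine lt_of_lt_of_le ?_ (le_valuation_hasseDeriv_multiset_prod_X_sub_C hμ (d := d')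
    (fun a ha => Finset.le_sup' (fun a => aval μ (X - C a)) (Multiset.mem_toFinset.mpr ha)) r)
  exact WithTop.coe_lt_coe.mpr (sub_lt_sub_left (nsmul_lt_nsmul_right hr.ne' hd'd) _)

theorem lt_valuation_hasseDeriv_mul_hasseDeriv (hμ : TrivialSupport μ) {t u : Multiset L}
    {d : Γ} (ht : ∀ a ∈ t, aval μ (X - C a) ≤ d) (hu : ∀ a ∈ u, aval μ (X - C a) < d)
    (i : ℕ) {j : ℕ} (hj : 0 < j) :
    (((t.map fun a => aval μ (X - C a)).sum + (u.map fun a => aval μ (X - C a)).sum -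
        (i + j) • d : Γ) : WithTop Γ) <
      μ (hasseDeriv i (t.map fun a => X - C a).prod *
        hasseDeriv j (u.map fun a => X - C a).prod) := by
  rw [μ.map_mul]
  convert WithTop.add_lt_add_of_le_of_lt WithTop.coe_ne_top
    (le_valuation_hasseDeriv_multiset_prod_X_sub_C hμ ht i)
    (lt_valuation_hasseDeriv_multiset_prod_X_sub_C hμ hu hj) using 1
  rw [← WithTop.coe_add, add_nsmul]
  congr 1
  abel

open Finset.HasAntidiagonal in
theorem exists_valuation_hasseDeriv_multiset_prod_X_sub_C_eq (hμ : TrivialSupport μ)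
    {s : Multiset L} {d : Γ} (hd : ∀ a ∈ s, aval μ (X - C a) ≤ d)
    (hmax : ∃ a ∈ s, aval μ (X - C a) = d) :
    ∃ r, 0 < r ∧ μ (hasseDeriv r (s.map fun a => X - C a).prod) =
      (((s.map fun a => aval μ (X - C a)).sum - r • d : Γ) : WithTop Γ) := by
  classical
  set D := s.filter fun a => aval μ (X - C a) = d
  set E := s.filter fun a => aval μ (X - C a) ≠ d
  have hD : ∀ a ∈ D, aval μ (X - C a) ≤ d := fun a ha => (Multiset.mem_filter.mp ha).2.le
  have hE : ∀ a ∈ E, aval μ (X - C a) < d := fun a ha =>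
    (hd a (Multiset.mem_filter.mp ha).1).lt_of_ne (Multiset.mem_filter.mp ha).2
  have hdegD : (D.map fun a => X - C a).prod.natDegree = Multiset.card D :=
    natDegree_multiset_prod_X_sub_C_eq_card D
  have hsumD : (D.map fun a => aval μ (X - C a)).sum = Multiset.card D • d := by
    rw [Multiset.map_congr rfl fun a ha => (Multiset.mem_filter.mp ha).2, Multiset.map_const',
      Multiset.sum_replicate]
  have hsum : (s.map fun a => aval μ (X - C a)).sum =
      Multiset.card D • d + (E.map fun a => aval μ (X - C a)).sum := by
    rw [← hsumD, ← Multiset.sum_add, ← Multiset.map_add, Multiset.filter_add_not]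
  have hprod : (s.map fun a => X - C a).prod =
      (D.map fun a => X - C a).prod * (E.map fun a => X - C a).prod := by
    rw [← Multiset.prod_add, ← Multiset.map_add, Multiset.filter_add_not]
  have hleibniz := hasseDeriv_natDegree_mul_of_monic
    (monic_multiset_prod_of_monic D (fun a => X - C a) fun a _ => monic_X_sub_C a)
    (E.map fun a => X - C a).prod
  rw [hdegD] at hleibniz
  have hrest : (((E.map fun a => aval μ (X - C a)).sum : Γ) : WithTop Γ) <
      μ (∑ ij ∈ (antidiagonal (Multiset.card D)).erase (Multiset.card D, 0),
        hasseDeriv ij.1 (D.map fun a => X - C a).prod *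
          hasseDeriv ij.2 (E.map fun a => X - C a).prod) := by
    refine μ.map_lt_sum' (WithTop.coe_lt_top _) fun ij hij => ?_
    obtain ⟨hne, hij⟩ := Finset.mem_erase.mp hij
    have hj : 0 < ij.2 :=
      Nat.pos_of_ne_zero fun h => hne (Prod.ext (by simpa [h] using mem_antidiagonal.mp hij) h)
    convert lt_valuation_hasseDeriv_mul_hasseDeriv hμ hD hE ij.1 hj using 2
    rw [mem_antidiagonal.mp hij, hsumD, add_sub_cancel_left]
  obtain ⟨a, has, had⟩ := hmax
  refine ⟨Multiset.card D, Multiset.card_pos_iff_exists_mem.mpr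
    ⟨a, Multiset.mem_filter.mpr ⟨has, had⟩⟩, ?_⟩
  rw [hprod, hleibniz, μ.map_add_eq_of_lt_left (by rwa [valuation_multiset_prod_X_sub_C hμ]),
    valuation_multiset_prod_X_sub_C hμ, hsum, add_sub_cancel_left]

end ValuationOfRoots

section Eps

variable {K Γ : Type*} [Field K] [AddCommGroup Γ] [LinearOrder Γ] [IsOrderedAddMonoid Γ]

theorem mem_epsSupport {f : K[X]} {r : ℕ} :
    r ∈ epsSupport f ↔ 0 < r ∧ hasseDeriv r f ≠ 0 := by
  simp only [epsSupport, Finset.mem_filter, Finset.mem_Icc]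
  refine ⟨fun ⟨⟨hr, _⟩, h⟩ => ⟨hr, h⟩, fun ⟨hr, h⟩ => ⟨⟨hr, ?_⟩, h⟩⟩
  by_contra hlt
  exact h (hasseDeriv_eq_zero_of_lt_natDegree f r (not_le.mp hlt))

theorem epsSupport_map {L : Type*} [Field L] (φ : K →+* L) (f : K[X]) :
    epsSupport (f.map φ) = epsSupport f := by
  ext r
  simp only [mem_epsSupport, hasseDeriv_map, Polynomial.map_ne_zero_iff φ.injective]

theorem eps_map_of_isExtension [Module ℚ Γ] {L : Type*} [Field L] [Algebra K L]
    {ν : AddValuation K[X] (WithTop Γ)} {μ : AddValuation L[X] (WithTop Γ)}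
    (hext : IsExtension μ ν) (f : K[X]) : eps μ (f.map (algebraMap K L)) = eps ν f := by
  have haval (p : K[X]) : aval μ (p.map (algebraMap K L)) = aval ν p := by
    rw [aval, aval, hext]
  simp only [eps, epsSupport_map, hasseDeriv_map, haval]

theorem eps_multiset_prod_X_sub_C [Module ℚ Γ] [PosSMulStrictMono ℚ Γ] [DecidableEq K]
    {μ : AddValuation K[X] (WithTop Γ)} (hμ : TrivialSupport μ) {s : Multiset K} (hs : s ≠ 0) :
    eps μ (s.map fun a => X - C a).prod =
      s.toFinset.sup' (Multiset.toFinset_nonempty.mpr hs) fun a => aval μ (X - C a) := by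
  set Δ := s.toFinset.sup' (Multiset.toFinset_nonempty.mpr hs) fun a => aval μ (X - C a)
  have hΔ (a) (ha : a ∈ s) : aval μ (X - C a) ≤ Δ :=
    Finset.le_sup' (fun a => aval μ (X - C a)) (Multiset.mem_toFinset.mpr ha)
  have hmax : ∃ a ∈ s, aval μ (X - C a) = Δ := by
    obtain ⟨a, ha, h⟩ := Finset.exists_mem_eq_sup' (Multiset.toFinset_nonempty.mpr hs)
      fun a => aval μ (X - C a)
    exact ⟨a, Multiset.mem_toFinset.mp ha, h.symm⟩
  obtain ⟨r₀, hr₀, hval⟩ := exists_valuation_hasseDeriv_multiset_prod_X_sub_C_eq hμ hΔ hmax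
  have hr₀_mem : r₀ ∈ epsSupport (s.map fun a => X - C a).prod :=
    mem_epsSupport.mpr ⟨hr₀, fun h => WithTop.coe_ne_top (by rw [← hval, h, μ.map_zero])⟩
  rw [eps, dif_pos ⟨r₀, hr₀_mem⟩, aval_multiset_prod_X_sub_C hμ]
  refine le_antisymm (Finset.sup'_le _ _ fun r hr => ?_) (Finset.le_sup'_of_le _ hr₀_mem ?_)
  · obtain ⟨hr, hne⟩ := mem_epsSupport.mp hr
    have hle := le_valuation_hasseDeriv_multiset_prod_X_sub_C hμ hΔ r
    rw [← coe_aval_of_ne_zero hμ hne, WithTop.coe_le_coe] at hle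
    rw [inv_smul_le_iff_of_pos (by positivity), Nat.cast_smul_eq_nsmul]
    exact sub_le_comm.mp hle
  · rw [aval, hval, WithTop.untopD_coe, sub_sub_cancel, ← Nat.cast_smul_eq_nsmul ℚ,
      inv_smul_smul₀ (by positivity)]

end Eps

theorem delta_eq_eps_general {K : Type*} [Field K] {Γ : Type*} [AddCommGroup Γ] [LinearOrder Γ] [IsOrderedAddMonoid Γ]
    [Module ℚ Γ] [PosSMulStrictMono ℚ Γ] {L : Type*} [Field L] [Algebra K L] [IsAlgClosure K L]
    (ν : AddValuation (Polynomial K) (WithTop Γ)) (μ : AddValuation (Polynomial L) (WithTop Γ))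
    (hμ : TrivialSupport μ) (hext : IsExtension μ ν)
    (f : Polynomial K) (hf : f.Monic) (hdeg : 0 < f.natDegree) :
    delta μ f = eps ν f := by
  let := Classical.decEq L
  have := IsAlgClosure.isAlgClosed K (K := L)
  rw [← eps_map_of_isExtension hext, delta]
  set g := f.map (algebraMap K L)
  have hg : g = (g.roots.map fun a => X - C a).prod :=
    (IsAlgClosed.splits g).eq_prod_roots_of_monic (hf.map _)
  have hroots : g.roots ≠ 0 := fun h => by
    have := congrArg natDegree hg
    rw [h, hf.natDegree_map] at this
    simp [this] at hdeg
  rw [dif_pos (Multiset.toFinset_nonempty.mpr hroots)]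
  conv_rhs => rw [hg]
  exact (eps_multiset_prod_X_sub_C hμ hroots).symm

/-- For every monic polynomial `f ∈ K[x]`,
`δ(f) = max{μ(x - a) : a a root of f} = ε(f) = max_{r ≥ 1} (ν(f) - ν(∂_r f))/r`. -/
theorem delta_eq_eps {K : Type*} [Field K] {Γ : Type*} [AddCommGroup Γ] [LinearOrder Γ] [IsOrderedAddMonoid Γ]
    [Module ℚ Γ] [PosSMulStrictMono ℚ Γ] [PosSMulReflectLT ℚ Γ] {L : Type*} [Field L] [Algebra K L] [IsAlgClosure K L]
    (ν : AddValuation (Polynomial K) (WithTop Γ)) (μ : AddValuation (Polynomial L) (WithTop Γ))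
    (hν : TrivialSupport ν) (hμ : TrivialSupport μ) (hext : IsExtension μ ν)
    (f : Polynomial K) (hf : f.Monic) (hdeg : 0 < f.natDegree) :
    delta μ f = eps ν f :=
  delta_eq_eps_general ν μ hμ hext f hf hdeg
end

section
/- Let K be a field and ν a valuation on K[x] with trivial support. If q ∈ K[x] is a polynomial such that ν = ν_q, then also ν = ν_{q²}. -/
open Polynomial

/-!
Write `p = Σ pᵢ qⁱ`. Grouping the `q`-expansion in pairs, the `j`-th coefficient of the
`q²`-expansion of `p` is `p₂ⱼ + p₂ⱼ₊₁ q`, so every term of the `q²`-expansion is the sum of two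
terms of the `q`-expansion and `ν_q ≤ ν_{q²}`. On the other hand every truncation satisfies
`ν_Q ≤ ν`, because `p` is the sum of the terms of its `Q`-expansion. Hence
`ν = ν_q ≤ ν_{q²} ≤ ν`.
-/

namespace Polynomial

variable {K : Type*} [Field K]

theorem div_mod_unique {p q s t : K[X]} (ht : t.degree < q.degree) (h : p = s * q + t) :
    p / q = s ∧ p % q = t := by
  have hq : q ≠ 0 := by rintro rfl; simp at ht
  have hdiff : q * (p / q - s) = t - p % q := by
    linear_combination EuclideanDomain.div_add_mod p q + h
  have hdiv : p / q = s := by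
    by_contra hne
    have hle := degree_le_mul_left q (sub_ne_zero.2 hne)
    rw [hdiff] at hle
    exact hle.not_gt ((degree_sub_le _ _).trans_lt (max_lt ht (EuclideanDomain.mod_lt _ hq)))
  rw [hdiv, sub_self, mul_zero, eq_comm, sub_eq_zero] at hdiff
  exact ⟨hdiv, hdiff.symm⟩

theorem div_mod_mul (p : K[X]) {q r : K[X]} (hq : q ≠ 0) (hr : r ≠ 0) :
    p / (q * r) = p / q / r ∧ p % (q * r) = p / q % r * q + p % q := by
  apply div_mod_unique
  · rw [degree_mul]
    refine (degree_add_le _ _).trans_lt (max_lt ?_ ?_)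
    · rw [degree_mul, add_comm]
      exact WithBot.add_lt_add_left (degree_ne_bot.2 hq) (EuclideanDomain.mod_lt _ hr)
    · exact (EuclideanDomain.mod_lt _ hq).trans_le
        (le_add_of_nonneg_right (zero_le_degree_iff.2 hr))
  · linear_combination
      (-q) * EuclideanDomain.div_add_mod (p / q) r - EuclideanDomain.div_add_mod p q

theorem div_pow_eq_zero_of_natDegree_lt {p q : K[X]} {i : ℕ} (hq : 0 < q.natDegree)
    (hi : p.natDegree < i) : p / q ^ i = 0 := by
  refine (Polynomial.div_eq_zero_iff (pow_ne_zero i (ne_zero_of_natDegree_gt hq))).2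
    (degree_lt_degree ?_)
  rw [natDegree_pow]
  exact hi.trans_le (Nat.le_mul_of_pos_right i hq)

end Polynomial

section qExpansion

variable {K : Type*} [Field K] {q : K[X]}

theorem qCoeff_eq_div_pow_mod (hq : q ≠ 0) (j : ℕ) (p : K[X]) :
    qCoeff q j p = p / q ^ j % q := by
  induction j generalizing p with
  | zero => simp [qCoeff]
  | succ n ih => rw [qCoeff, ih, ← (div_mod_mul p hq (pow_ne_zero n hq)).1, pow_succ']

theorem qCoeff_eq_zero_of_natDegree_lt (hq : 0 < q.natDegree) {p : K[X]} {i : ℕ}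
    (hi : p.natDegree < i) : qCoeff q i p = 0 := by
  rw [qCoeff_eq_div_pow_mod (ne_zero_of_natDegree_gt hq), div_pow_eq_zero_of_natDegree_lt hq hi,
    EuclideanDomain.zero_mod]

theorem sum_qCoeff_mul_pow (hq : 0 < q.natDegree) {p : K[X]} {N : ℕ} (hN : p.natDegree < N) :
    ∑ j ∈ Finset.range N, qCoeff q j p * q ^ j = p := by
  have hq0 := ne_zero_of_natDegree_gt hq
  have htelescope (j : ℕ) :
      qCoeff q j p * q ^ j = p / q ^ j * q ^ j - p / q ^ (j + 1) * q ^ (j + 1) := by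
    rw [qCoeff_eq_div_pow_mod hq0, pow_succ, (div_mod_mul p (pow_ne_zero j hq0) hq0).1]
    linear_combination q ^ j * EuclideanDomain.div_add_mod (p / q ^ j) q
  rw [Finset.sum_congr rfl fun j _ => htelescope j, Finset.sum_range_sub', pow_zero,
    EuclideanDomain.div_one, mul_one, div_pow_eq_zero_of_natDegree_lt hq hN, zero_mul, sub_zero]

theorem qCoeff_sq (hq : q ≠ 0) (j : ℕ) (p : K[X]) :
    qCoeff (q ^ 2) j p = qCoeff q (2 * j + 1) p * q + qCoeff q (2 * j) p := by
  rw [qCoeff_eq_div_pow_mod (pow_ne_zero 2 hq), qCoeff_eq_div_pow_mod hq,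
    qCoeff_eq_div_pow_mod hq, ← pow_mul, pow_succ q (2 * j), sq q, (div_mod_mul _ hq hq).2,
    (div_mod_mul p (pow_ne_zero _ hq) hq).1]

end qExpansion

section Truncation

variable {K : Type*} [Field K] {Γ : Type*} [AddCommGroup Γ] [LinearOrder Γ]
  [IsOrderedAddMonoid Γ] (ν : AddValuation K[X] (WithTop Γ)) {q : K[X]}

theorem trunc_le_map_qCoeff_mul_pow (hq : 0 < q.natDegree) (p : K[X]) (i : ℕ) :
    trunc ν q p ≤ ν (qCoeff q i p * q ^ i) := by
  rcases le_or_gt i p.natDegree with hi | hi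
  · exact Finset.inf_le (Finset.mem_range.2 (Nat.lt_succ_of_le hi))
  · rw [qCoeff_eq_zero_of_natDegree_lt hq hi, zero_mul, ν.map_zero]
    exact le_top

theorem trunc_le_map (hq : 0 < q.natDegree) (p : K[X]) : trunc ν q p ≤ ν p := by
  conv_rhs => rw [← sum_qCoeff_mul_pow hq p.natDegree.lt_succ_self]
  exact ν.map_le_sum fun i _ => trunc_le_map_qCoeff_mul_pow ν hq p i

theorem trunc_le_trunc_sq (hq : 0 < q.natDegree) (p : K[X]) :
    trunc ν q p ≤ trunc ν (q ^ 2) p := by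
  refine Finset.le_inf fun j _ => ?_
  have hterm : qCoeff (q ^ 2) j p * (q ^ 2) ^ j =
      qCoeff q (2 * j) p * q ^ (2 * j) + qCoeff q (2 * j + 1) p * q ^ (2 * j + 1) := by
    rw [qCoeff_sq (ne_zero_of_natDegree_gt hq)]
    ring
  rw [hterm]
  exact ν.map_le_add (trunc_le_map_qCoeff_mul_pow ν hq p _)
    (trunc_le_map_qCoeff_mul_pow ν hq p _)

end Truncation

theorem trunc_sq_eq_of_trunc_eq_general {K : Type*} [Field K] {Γ : Type*} [AddCommGroup Γ] [LinearOrder Γ] [IsOrderedAddMonoid Γ]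
    (ν : AddValuation (Polynomial K) (WithTop Γ))
    (q : Polynomial K) (hq : 0 < q.natDegree)
    (h : ∀ p : Polynomial K, ν p = trunc ν q p) :
    ∀ p : Polynomial K, ν p = trunc ν (q ^ 2) p := by
  have hq2 : 0 < (q ^ 2).natDegree := by
    rw [natDegree_pow]
    omega
  intro p
  refine le_antisymm ?_ (trunc_le_map ν hq2 p)
  rw [h p]
  exact trunc_le_trunc_sq ν hq p

/-- If `ν = ν_q` for some polynomial `q ∈ K[x]`, then also `ν = ν_{q²}`. -/
theorem trunc_sq_eq_of_trunc_eq {K : Type*} [Field K] {Γ : Type*} [AddCommGroup Γ] [LinearOrder Γ] [IsOrderedAddMonoid Γ]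
    (ν : AddValuation (Polynomial K) (WithTop Γ)) (hν : TrivialSupport ν)
    (q : Polynomial K) (hq : 0 < q.natDegree)
    (h : ∀ p : Polynomial K, ν p = trunc ν q p) :
    ∀ p : Polynomial K, ν p = trunc ν (q ^ 2) p :=
  trunc_sq_eq_of_trunc_eq_general ν q hq h
end

section
/- Let K be a field and ν a valuation on K[x] with trivial support, extended to K(x). Suppose ν is value-transcendental and let q ∈ K[x] be a polynomial of smallest degree such that ν(q) is torsion-free over νK (i.e., nν(q) ∉ νK for all n ≥ 1). Then ν = ν_q. -/
open Polynomial

/-!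
Write `p = Σ pᵢ qⁱ` with `deg pᵢ < deg q`. By minimality of `deg q`, the value of every nonzero
`pᵢ` is torsion over `νK`, while `ν q` is not; hence the values `ν pᵢ + i ν q` of the nonzero
terms are pairwise distinct, and the value of the sum is their minimum.
-/

namespace AddValuation

variable {R Γ₀ ι : Type*} [Ring R] [LinearOrderedAddCommGroupWithTop Γ₀]

theorem map_sum_eq_inf (v : AddValuation R Γ₀) (s : Finset ι) (f : ι → R)
    (hf : ∀ i ∈ s, ∀ j ∈ s, i ≠ j → v (f i) = v (f j) → v (f i) = ⊤) :
    v (∑ i ∈ s, f i) = s.inf fun i => v (f i) := by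
  classical
  refine le_antisymm ?_ (v.map_le_sum fun i hi => Finset.inf_le hi)
  rcases s.eq_empty_or_nonempty with rfl | hs
  · simp
  obtain ⟨i₀, hi₀, hinf⟩ := s.exists_mem_eq_inf hs fun i => v (f i)
  rw [hinf]
  by_cases htop : v (f i₀) = ⊤
  · exact htop ▸ le_top
  have hrest : v (f i₀) < v (∑ i ∈ s.erase i₀, f i) := by
    refine v.map_lt_sum htop fun i hi => lt_of_le_of_ne ?_ fun h => htop ?_
    · exact hinf ▸ Finset.inf_le (Finset.mem_of_mem_erase hi)
    · exact hf i₀ hi₀ i (Finset.mem_of_mem_erase hi) (Finset.ne_of_mem_erase hi).symm h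
  rw [← Finset.add_sum_erase s f hi₀, v.map_add_eq_of_lt_left hrest]

end AddValuation

theorem eq_of_add_nsmul_eq_add_nsmul {G : Type*} [AddCommGroup G] {a b x : G}
    (ha : IsOfFinAddOrder a) (hb : IsOfFinAddOrder b) (hx : ¬ IsOfFinAddOrder x) {i j : ℕ}
    (h : a + i • x = b + j • x) : i = j := by
  wlog hij : i ≤ j generalizing a b i j
  · exact (this hb ha h.symm (by omega)).symm
  obtain ⟨k, rfl⟩ := Nat.exists_eq_add_of_le hij
  rw [add_nsmul, add_comm (i • x), ← add_assoc, add_left_inj] at h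
  have hk : IsOfFinAddOrder (k • x) := by
    rw [show k • x = a + -b by rw [h]; abel]
    exact ha.add hb.neg
  by_contra hk0
  exact hx (hk.of_nsmul (by omega))

namespace Polynomial

variable {K : Type*} [Field K]

theorem natDegree_qCoeff_lt {q : K[X]} (hq : 0 < q.natDegree) (i : ℕ) (p : K[X]) :
    (qCoeff q i p).natDegree < q.natDegree := by
  induction i generalizing p with
  | zero => exact natDegree_mod_lt p hq.ne'
  | succ i ih => exact ih (p / q)

theorem sum_qCoeff_mul_pow {q : K[X]} (hq : 0 < q.natDegree) {N : ℕ} {p : K[X]}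
    (hp : p.natDegree ≤ N) : ∑ i ∈ Finset.range (N + 1), qCoeff q i p * q ^ i = p := by
  have hq0 : q ≠ 0 := ne_zero_of_natDegree_gt hq
  induction N generalizing p with
  | zero =>
    have hpq : p.degree < q.degree :=
      (degree_le_of_natDegree_le hp).trans_lt (natDegree_pos_iff_degree_pos.mp hq)
    simpa [qCoeff] using (mod_eq_self_iff hq0).mpr hpq
  | succ N ih =>
    have hdiv : (p / q).natDegree ≤ N := by
      rcases eq_or_ne (p / q) 0 with h | h
      · simp [h]
      have hp0 : p ≠ 0 := by rintro rfl; simp at h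
      have := natDegree_lt_natDegree h (degree_div_lt hp0 (natDegree_pos_iff_degree_pos.mp hq))
      omega
    calc ∑ i ∈ Finset.range (N + 1 + 1), qCoeff q i p * q ^ i
        = (∑ i ∈ Finset.range (N + 1), qCoeff q i (p / q) * q ^ i) * q + p % q := by
          rw [Finset.sum_range_succ', Finset.sum_mul]
          simp only [pow_succ, pow_zero, mul_one, ← mul_assoc]
          rfl
      _ = p := by rw [ih hdiv, mul_comm, EuclideanDomain.div_add_mod]

end Polynomial

section ValueGroup

variable {K Γ : Type*} [Field K] [AddCommGroup Γ] [LinearOrder Γ] [IsOrderedAddMonoid Γ]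
  (ν : AddValuation K[X] (WithTop Γ))

/-- The value group `νK`. -/
def constValueGroup : AddSubgroup Γ where
  carrier := {g | ∃ c : K, c ≠ 0 ∧ ν (C c) = g}
  zero_mem' := ⟨1, one_ne_zero, by simp⟩
  add_mem' := by
    rintro _ _ ⟨c, hc, hcg⟩ ⟨d, hd, hdg⟩
    exact ⟨c * d, mul_ne_zero hc hd, by rw [C_mul, ν.map_mul, hcg, hdg, WithTop.coe_add]⟩
  neg_mem' := by
    rintro g ⟨c, hc, hcg⟩
    refine ⟨c⁻¹, inv_ne_zero hc, ?_⟩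
    calc ν (C c⁻¹) = ν (C c⁻¹) + ((g : WithTop Γ) + ((-g : Γ) : WithTop Γ)) := by
          rw [← WithTop.coe_add, add_neg_cancel, WithTop.coe_zero, add_zero]
      _ = ν (C c⁻¹ * C c) + ((-g : Γ) : WithTop Γ) := by rw [ν.map_mul, hcg, add_assoc]
      _ = ((-g : Γ) : WithTop Γ) := by rw [← C_mul, inv_mul_cancel₀ hc, C_1, ν.map_one, zero_add]

def HasTorsionFreeValue (f : K[X]) : Prop :=
  ∀ n : ℕ, 0 < n → ∀ c : K, c ≠ 0 → ν (f ^ n) ≠ ν (C c)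

variable {ν}

theorem hasTorsionFreeValue_iff {f : K[X]} {g : Γ} (hf : ν f = g) :
    HasTorsionFreeValue ν f ↔ ¬ IsOfFinAddOrder (g : Γ ⧸ constValueGroup ν) := by
  simp only [isOfFinAddOrder_iff_nsmul_eq_zero, ← QuotientAddGroup.mk_nsmul,
    QuotientAddGroup.eq_zero_iff, HasTorsionFreeValue, ν.map_pow, hf, ← WithTop.coe_nsmul]
  simp [constValueGroup, eq_comm]

theorem natDegree_pos_of_hasTorsionFreeValue {q : K[X]} (hq0 : q ≠ 0)
    (htf : HasTorsionFreeValue ν q) : 0 < q.natDegree := by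
  by_contra h
  rw [not_lt, Nat.le_zero] at h
  rw [eq_C_of_natDegree_eq_zero h] at hq0 htf
  exact htf 1 one_pos _ (by simpa using hq0) (by rw [pow_one])

end ValueGroup

section MinimalTorsionFree

variable {K Γ : Type*} [Field K] [AddCommGroup Γ] [LinearOrder Γ] [IsOrderedAddMonoid Γ]
  {ν : AddValuation K[X] (WithTop Γ)} {q : K[X]}

theorem eq_of_val_mul_pow_eq (hν : TrivialSupport ν) (hq0 : q ≠ 0) (htf : HasTorsionFreeValue ν q)
    (hmin : ∀ p : K[X], p ≠ 0 → HasTorsionFreeValue ν p → q.natDegree ≤ p.natDegree)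
    {a b : K[X]} (ha : a ≠ 0) (hb : b ≠ 0) (hda : a.natDegree < q.natDegree)
    (hdb : b.natDegree < q.natDegree) {i j : ℕ} (h : ν (a * q ^ i) = ν (b * q ^ j)) : i = j := by
  have hfin : ∀ {f : K[X]}, f ≠ 0 → ∃ g : Γ, ν f = g := fun hf =>
    (WithTop.ne_top_iff_exists.mp fun htop => hf (hν _ htop)).imp fun _ => Eq.symm
  have torsion_of_lt : ∀ {f : K[X]} {g : Γ}, f ≠ 0 → f.natDegree < q.natDegree → ν f = g →
      IsOfFinAddOrder (g : Γ ⧸ constValueGroup ν) := fun hf hd hfg => by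
    by_contra hg
    exact hd.not_ge (hmin _ hf ((hasTorsionFreeValue_iff hfg).mpr hg))
  obtain ⟨A, hA⟩ := hfin ha
  obtain ⟨B, hB⟩ := hfin hb
  obtain ⟨Q, hQ⟩ := hfin hq0
  have hAB : A + i • Q = B + j • Q := by
    rw [ν.map_mul, ν.map_mul, ν.map_pow, ν.map_pow, hA, hB, hQ] at h
    exact_mod_cast h
  refine eq_of_add_nsmul_eq_add_nsmul (torsion_of_lt ha hda hA) (torsion_of_lt hb hdb hB)
    ((hasTorsionFreeValue_iff hQ).mp htf) ?_
  exact_mod_cast congrArg (QuotientAddGroup.mk (s := constValueGroup ν)) hAB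

end MinimalTorsionFree

theorem trunc_eq_of_valueTranscendental_general {K : Type*} [Field K] {Γ : Type*}
    [AddCommGroup Γ] [LinearOrder Γ] [IsOrderedAddMonoid Γ]
    (ν : AddValuation (Polynomial K) (WithTop Γ))
    (hν : TrivialSupport ν)
    (q : Polynomial K) (hq0 : q ≠ 0)
    (htf : ∀ n : ℕ, 0 < n → ∀ c : K, c ≠ 0 → ν (q ^ n) ≠ ν (C c))
    (hmin : ∀ p : Polynomial K, p ≠ 0 →
      (∀ n : ℕ, 0 < n → ∀ c : K, c ≠ 0 → ν (p ^ n) ≠ ν (C c)) → q.natDegree ≤ p.natDegree) :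
    ∀ p : Polynomial K, ν p = trunc ν q p := by
  intro p
  have hq : 0 < q.natDegree := natDegree_pos_of_hasTorsionFreeValue hq0 htf
  calc ν p = ν (∑ i ∈ Finset.range (p.natDegree + 1), qCoeff q i p * q ^ i) := by
        rw [sum_qCoeff_mul_pow hq le_rfl]
    _ = trunc ν q p := by
      refine ν.map_sum_eq_inf _ _ fun i _ j _ hij h => ?_
      by_cases hi : qCoeff q i p = 0
      · simp [hi]
      by_cases hj : qCoeff q j p = 0
      · simp [h, hj]
      exact absurd (eq_of_val_mul_pow_eq hν hq0 htf hmin hi hj (natDegree_qCoeff_lt hq i p)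
        (natDegree_qCoeff_lt hq j p) h) hij

/-- Suppose `ν` is value-transcendental and `q ∈ K[x]` is a polynomial of
smallest degree such that `ν(q)` is torsion-free over `νK` (i.e. `n·ν(q) ∉ νK` for all
`n ≥ 1`). Then `ν = ν_q`. -/
theorem trunc_eq_of_valueTranscendental {K : Type*} [Field K] {Γ : Type*}
    [AddCommGroup Γ] [LinearOrder Γ] [IsOrderedAddMonoid Γ]
    (ν : AddValuation (Polynomial K) (WithTop Γ)) (w : AddValuation (RatFunc K) (WithTop Γ))
    (hν : TrivialSupport ν) (hw : ExtendsToRatFunc w ν)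
    (hvt : IsValueTranscendental w)
    (q : Polynomial K) (hq0 : q ≠ 0)
    (htf : ∀ n : ℕ, 0 < n → ∀ c : K, c ≠ 0 → ν (q ^ n) ≠ ν (C c))
    (hmin : ∀ p : Polynomial K, p ≠ 0 →
      (∀ n : ℕ, 0 < n → ∀ c : K, c ≠ 0 → ν (p ^ n) ≠ ν (C c)) → q.natDegree ≤ p.natDegree) :
    ∀ p : Polynomial K, ν p = trunc ν q p :=
  trunc_eq_of_valueTranscendental_general ν hν q hq0 htf hmin
end

section
/- Let (L, w) be a valued field and {a_ρ}_{ρ<λ} a pseudo-convergent sequence in L for w. Then for every polynomial f ∈ L[x] there exists ρ_f < λ such that either w(f(a_σ)) = w(f(a_{ρ_f})) for every ρ_f ≤ σ < λ, or w(f(a_σ)) > w(f(a_ρ)) for every ρ_f ≤ ρ < σ < λ. -/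
open Polynomial

/-! Over an algebraically closed field, `f = c ∏ (X - r)`, so `w (f a_ρ)` is the sum of the
values `w (a_ρ - r)` over the roots `r`. For a single root, either some `a_ρ₀` is closer to all
later terms than to `r`, and then `w (a_σ - r) = w (a_ρ₀ - r)` for `σ ≥ ρ₀`, or `r` is at least as
close to each `a_ρ` as the later terms are, and then `w (a_ρ - r) = w (a_σ - a_ρ)` for `σ > ρ`,
which strictly increases with `ρ`. Sums of eventually constant or eventually strictly increasing
functions are again of this kind. The general case reduces to this one by extending `w` to an
algebraic closure of `L` (Chevalley's extension theorem). Mathlib's valuations are multiplicative,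
so for them "strictly increasing" reads "strictly antitone". -/

section EventuallyConstOrStrictAnti

variable {ι α : Type*} [LinearOrder ι]

def EventuallyConstOrStrictAnti [Preorder α] (g : ι → α) : Prop :=
  ∃ ρ₀, (∃ c, ∀ σ, ρ₀ ≤ σ → g σ = c) ∨ StrictAntiOn g (Set.Ici ρ₀)

theorem eventuallyConstOrStrictAnti_const [Preorder α] [Nonempty ι] (c : α) :
    EventuallyConstOrStrictAnti fun _ : ι => c :=
  ⟨Classical.arbitrary ι, Or.inl ⟨c, fun _ _ => rfl⟩⟩

theorem EventuallyConstOrStrictAnti.of_le_iff_le [Preorder α] {β : Type*} [PartialOrder β]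
    {f : ι → α} {g : ι → β} (hfg : ∀ ρ σ, f ρ ≤ f σ ↔ g ρ ≤ g σ)
    (hf : EventuallyConstOrStrictAnti f) : EventuallyConstOrStrictAnti g := by
  obtain ⟨ρ₀, ⟨c, hc⟩ | hf⟩ := hf
  · refine ⟨ρ₀, Or.inl ⟨g ρ₀, fun σ hσ => le_antisymm ?_ ?_⟩⟩
    · exact (hfg σ ρ₀).1 (by rw [hc σ hσ, hc ρ₀ le_rfl])
    · exact (hfg ρ₀ σ).1 (by rw [hc σ hσ, hc ρ₀ le_rfl])
  · exact ⟨ρ₀, Or.inr fun ρ hρ σ hσ hρσ =>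
      lt_of_le_not_ge ((hfg σ ρ).1 (hf hρ hσ hρσ).le) (mt (hfg ρ σ).2 (hf hρ hσ hρσ).not_ge)⟩

variable [LinearOrderedCommGroupWithZero α] {f g : ι → α}

theorem eventuallyConstOrStrictAnti_mul_of_eventually_const {ρ₀ : ι} {c : α}
    (hf : ∀ σ, ρ₀ ≤ σ → f σ = c) (hg : EventuallyConstOrStrictAnti g) :
    EventuallyConstOrStrictAnti (f * g) := by
  obtain ⟨ρ₁, ⟨d, hd⟩ | hg⟩ := hg
  · exact ⟨max ρ₀ ρ₁, Or.inl ⟨c * d, fun σ hσ => by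
      rw [Pi.mul_apply, hf σ (le_of_max_le_left hσ), hd σ (le_of_max_le_right hσ)]⟩⟩
  rcases eq_or_ne c 0 with rfl | hc
  · exact ⟨ρ₀, Or.inl ⟨0, fun σ hσ => by rw [Pi.mul_apply, hf σ hσ, zero_mul]⟩⟩
  refine ⟨max ρ₀ ρ₁, Or.inr fun ρ hρ σ hσ hρσ => ?_⟩
  rw [Pi.mul_apply, Pi.mul_apply, hf ρ (le_of_max_le_left hρ), hf σ (le_of_max_le_left hσ)]
  exact mul_lt_mul_of_pos_left (hg (le_of_max_le_right hρ) (le_of_max_le_right hσ) hρσ)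
    (zero_lt_iff.2 hc)

theorem EventuallyConstOrStrictAnti.mul (hf : EventuallyConstOrStrictAnti f)
    (hg : EventuallyConstOrStrictAnti g) : EventuallyConstOrStrictAnti (f * g) := by
  obtain ⟨ρ₀, ⟨c, hc⟩ | hf⟩ := hf
  · exact eventuallyConstOrStrictAnti_mul_of_eventually_const hc hg
  obtain ⟨ρ₁, ⟨d, hd⟩ | hg⟩ := hg
  · rw [mul_comm]
    exact eventuallyConstOrStrictAnti_mul_of_eventually_const hd ⟨ρ₀, Or.inr hf⟩
  refine ⟨max ρ₀ ρ₁, Or.inr fun ρ hρ σ hσ hρσ => ?_⟩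
  exact Left.mul_lt_mul_of_nonneg (hf (le_of_max_le_left hρ) (le_of_max_le_left hσ) hρσ)
    (hg (le_of_max_le_right hρ) (le_of_max_le_right hσ) hρσ) zero_le zero_le

theorem EventuallyConstOrStrictAnti.multiset_prod [Nonempty ι] {β : Type*} {s : Multiset β}
    {g : β → ι → α} (hg : ∀ r ∈ s, EventuallyConstOrStrictAnti (g r)) :
    EventuallyConstOrStrictAnti fun ρ => (s.map fun r => g r ρ).prod := by
  induction s using Multiset.induction_on with
  | empty => simpa using eventuallyConstOrStrictAnti_const (1 : α)
  | cons r s ih =>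
    simp only [Multiset.map_cons, Multiset.prod_cons]
    exact (hg r (Multiset.mem_cons_self r s)).mul
      (ih fun r' hr' => hg r' (Multiset.mem_cons_of_mem hr'))

end EventuallyConstOrStrictAnti

/- `B` dominates the image of `O`; if `e x ∈ B` with `x ∉ O`, then `x⁻¹` would be a nonunit of `O`
mapped to a unit of `B`. -/
theorem ValuationSubring.exists_comap_eq {K M : Type*} [Field K] [Field M]
    (O : ValuationSubring K) (e : K →+* M) : ∃ B : ValuationSubring M, B.comap e = O := by
  obtain ⟨B, hB, hloc⟩ := IsLocalRing.exists_factor_valuationRing (e.comp O.subtype)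
  refine ⟨B, le_antisymm (fun x hx => ?_) fun x hx => hB ⟨x, hx⟩⟩
  by_contra hxO
  have hx0 : x ≠ 0 := fun h => hxO (h ▸ O.zero_mem)
  let y : O := ⟨x⁻¹, (O.mem_or_inv_mem x).resolve_left hxO⟩
  have hy : IsUnit ((e.comp O.subtype).codRestrict B.toSubring hB y) :=
    isUnit_iff_exists_inv.2 ⟨⟨e x, hx⟩, Subtype.ext <| by simp [y, hx0]⟩
  obtain ⟨z, hz⟩ := isUnit_iff_exists_inv.1 (hloc.map_nonunit y hy)
  have hxz : x = z := by
    have := congrArg Subtype.val hz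
    simp only [y, MulMemClass.coe_mul, OneMemClass.coe_one] at this
    exact (inv_mul_eq_one₀ hx0).1 this
  exact hxO (hxz ▸ z.2)

theorem Valuation.exists_comap_isEquiv {K M : Type*} [Field K] [Field M] {Γ₀ : Type*}
    [LinearOrderedCommGroupWithZero Γ₀] (v : Valuation K Γ₀) (e : K →+* M) :
    ∃ B : ValuationSubring M, (B.valuation.comap e).IsEquiv v := by
  obtain ⟨B, hB⟩ := v.valuationSubring.exists_comap_eq e
  refine ⟨B, (Valuation.isEquiv_iff_valuationSubring _ _).2 ?_⟩
  ext x
  rw [Valuation.mem_valuationSubring_iff, Valuation.comap_apply,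
    ValuationSubring.valuation_le_one_iff, ← ValuationSubring.mem_comap, hB]

namespace Valuation

section PseudoConvergent

variable {ι : Type*} [LinearOrder ι]

def IsPseudoConvergent {R Γ₀ : Type*} [Ring R] [LinearOrderedCommMonoidWithZero Γ₀]
    (v : Valuation R Γ₀) (a : ι → R) : Prop :=
  ∀ ⦃ρ σ τ⦄, ρ < σ → σ < τ → v (a τ - a σ) < v (a σ - a ρ)

theorem IsPseudoConvergent.eventuallyConstOrStrictAnti_sub {R Γ₀ : Type*} [Ring R]
    [LinearOrderedCommMonoidWithZero Γ₀] [Nonempty ι] {v : Valuation R Γ₀} {a : ι → R}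
    (ha : v.IsPseudoConvergent a) (c : R) :
    EventuallyConstOrStrictAnti fun ρ => v (a ρ - c) := by
  by_cases h : ∃ ρ₀, ∀ σ, ρ₀ < σ → v (a σ - a ρ₀) < v (a ρ₀ - c)
  · obtain ⟨ρ₀, hρ₀⟩ := h
    refine ⟨ρ₀, Or.inl ⟨v (a ρ₀ - c), fun σ hσ => ?_⟩⟩
    rcases hσ.eq_or_lt with rfl | hσ
    · rfl
    · dsimp only
      rw [← sub_add_sub_cancel (a σ) (a ρ₀) c, v.map_add_eq_of_lt_right (hρ₀ σ hσ)]
  · push Not at h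
    refine ⟨Classical.arbitrary ι, Or.inr fun ρ _ σ _ hρσ => ?_⟩
    obtain ⟨τ, hστ, hτ⟩ := h σ
    have hlt : v (a σ - c) < v (a ρ - a σ) := by
      rw [v.map_sub_swap (a ρ)]
      exact hτ.trans_lt (ha hρσ hστ)
    dsimp only
    rwa [← sub_add_sub_cancel' (a σ) c (a ρ), v.map_add_eq_of_lt_right hlt]

theorem IsPseudoConvergent.of_isEquiv {R Γ₁ Γ₂ : Type*} [Ring R]
    [LinearOrderedCommMonoidWithZero Γ₁] [LinearOrderedCommMonoidWithZero Γ₂]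
    {v₁ : Valuation R Γ₁} {v₂ : Valuation R Γ₂} {a : ι → R} (h : v₁.IsEquiv v₂)
    (ha : v₂.IsPseudoConvergent a) : v₁.IsPseudoConvergent a :=
  fun _ _ _ hρσ hστ => h.lt_iff_lt.2 (ha hρσ hστ)

theorem isPseudoConvergent_comap_iff {R S Γ₀ : Type*} [Ring R] [Ring S]
    [LinearOrderedCommMonoidWithZero Γ₀] {v : Valuation S Γ₀} {e : R →+* S} {a : ι → R} :
    (v.comap e).IsPseudoConvergent a ↔ v.IsPseudoConvergent (e ∘ a) := by
  simp only [IsPseudoConvergent, comap_apply, _root_.map_sub, Function.comp_apply]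

variable {K Γ₀ : Type*} [Field K] [LinearOrderedCommGroupWithZero Γ₀] [Nonempty ι]
  {v : Valuation K Γ₀} {a : ι → K}

theorem IsPseudoConvergent.eventuallyConstOrStrictAnti_eval_of_splits
    (ha : v.IsPseudoConvergent a) {f : K[X]} (hf : f.Splits) :
    EventuallyConstOrStrictAnti fun ρ => v (f.eval (a ρ)) := by
  have hval : ∀ x, v (f.eval x) = v f.leadingCoeff * (f.roots.map fun r => v (x - r)).prod := by
    intro x
    conv_lhs => rw [hf.eq_prod_roots]
    simp only [eval_mul, eval_C, eval_multiset_prod, Multiset.map_map, Function.comp_apply,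
      eval_sub, eval_X, map_mul, map_multiset_prod]
  simp only [hval]
  exact (eventuallyConstOrStrictAnti_const _).mul
    (EventuallyConstOrStrictAnti.multiset_prod fun r _ => ha.eventuallyConstOrStrictAnti_sub r)

theorem IsPseudoConvergent.eventuallyConstOrStrictAnti_eval (ha : v.IsPseudoConvergent a)
    (f : K[X]) : EventuallyConstOrStrictAnti fun ρ => v (f.eval (a ρ)) := by
  let e := algebraMap K (AlgebraicClosure K)
  obtain ⟨B, hB⟩ := v.exists_comap_isEquiv e
  have ha' : B.valuation.IsPseudoConvergent (e ∘ a) :=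
    isPseudoConvergent_comap_iff.1 (ha.of_isEquiv hB)
  refine (ha'.eventuallyConstOrStrictAnti_eval_of_splits (IsAlgClosed.splits (f.map e))
    ).of_le_iff_le fun ρ σ => ?_
  simp only [Function.comp_apply, eval_map, eval₂_at_apply]
  exact hB _ _

end PseudoConvergent

end Valuation

theorem pseudoConvergent_fixes_or_increases_general {L : Type*} [Field L] {Γ : Type*}
    [AddCommGroup Γ] [LinearOrder Γ] [IsOrderedAddMonoid Γ]
    {ι : Type*} [LinearOrder ι] [Nonempty ι]
    (w : AddValuation L (WithTop Γ)) (a : ι → L)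
    (hpc : ∀ ρ σ τ : ι, ρ < σ → σ < τ → w (a σ - a ρ) < w (a τ - a σ))
    (f : Polynomial L) :
    ∃ ρf : ι,
      (∀ σ : ι, ρf ≤ σ → w (f.eval (a σ)) = w (f.eval (a ρf))) ∨
      (∀ ρ σ : ι, ρf ≤ ρ → ρ < σ → w (f.eval (a ρ)) < w (f.eval (a σ))) := by
  have ha : w.toValuation.IsPseudoConvergent a := fun ρ σ τ hρσ hστ => hpc ρ σ τ hρσ hστ
  obtain ⟨ρf, ⟨c, hc⟩ | hanti⟩ := ha.eventuallyConstOrStrictAnti_eval f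
  · exact ⟨ρf, Or.inl fun σ hσ => (hc σ hσ).trans (hc ρf le_rfl).symm⟩
  · exact ⟨ρf, Or.inr fun ρ σ hρ hρσ => hanti hρ (hρ.trans hρσ.le) hρσ⟩

/-- Let `(L, w)` be a valued field and `{a_ρ}_{ρ<λ}` a pseudo-convergent
sequence in `L`. For every polynomial `f ∈ L[x]` there exists `ρ_f < λ` such that either
`w(f(a_σ)) = w(f(a_{ρ_f}))` for all `σ ≥ ρ_f`, or `w(f(a_σ)) > w(f(a_ρ))` for all
`ρ_f ≤ ρ < σ`. -/
theorem pseudoConvergent_fixes_or_increases {L : Type*} [Field L] {Γ : Type*}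
    [AddCommGroup Γ] [LinearOrder Γ] [IsOrderedAddMonoid Γ]
    {ι : Type*} [LinearOrder ι] [WellFoundedLT ι] [Nonempty ι] [NoMaxOrder ι]
    (w : AddValuation L (WithTop Γ)) (a : ι → L)
    (hpc : ∀ ρ σ τ : ι, ρ < σ → σ < τ → w (a σ - a ρ) < w (a τ - a σ))
    (f : Polynomial L) :
    ∃ ρf : ι,
      (∀ σ : ι, ρf ≤ σ → w (f.eval (a σ)) = w (f.eval (a ρf))) ∨
      (∀ ρ σ : ι, ρf ≤ ρ → ρ < σ → w (f.eval (a ρ)) < w (f.eval (a σ))) :=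
  pseudoConvergent_fixes_or_increases_general w a hpc f
end
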